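/- arXiv:2501.16978 — 5 statements merged into one kernel-verified Lean document; each statement's English description precedes it below -/
import Mathlib

section
/- Let F : C → D and G : D → C be functors such that F is left adjoint to G. Then F admits a two-sided adjoint (i.e., F is a Frobenius functor, meaning its left and right adjoints exist and are isomorphic) if and only if G admits a two-sided adjoint. -/
open CategoryTheory

/-- A functor is *Frobenius* if it admits a left adjoint and a right adjoint
which are (naturally) isomorphic, i.e. it admits a two-sided adjoint. -/
def CategoryTheory.Functor.IsFrobenius {C D : Type*} [Category C] [Category D]
    (F : C ⥤ D) : Prop :=
  ∃ (L R : D ⥤ C), Nonempty (L ⊣ F) ∧ Nonempty (F ⊣ R) ∧ Nonempty (L ≅ R)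

namespace CategoryTheory.Adjunction

variable {C D : Type*} [Category C] [Category D] {F : C ⥤ D} {G : D ⥤ C}

theorem isFrobenius_left_iff_nonempty_adjunction (adj : F ⊣ G) :
    F.IsFrobenius ↔ Nonempty (G ⊣ F) := by
  constructor
  · rintro ⟨L, R, ⟨hL⟩, ⟨hR⟩, ⟨e⟩⟩
    have eLG : L ≅ G := e ≪≫ rightAdjointUniq hR adj
    exact ⟨hL.ofNatIsoLeft eLG⟩
  · rintro ⟨adj'⟩
    exact ⟨G, G, ⟨adj'⟩, ⟨adj⟩, ⟨Iso.refl G⟩⟩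

theorem isFrobenius_right_iff_nonempty_adjunction (adj : F ⊣ G) :
    G.IsFrobenius ↔ Nonempty (G ⊣ F) := by
  constructor
  · rintro ⟨L, R, ⟨hL⟩, ⟨hR⟩, ⟨e⟩⟩
    have eRF : R ≅ F := e.symm ≪≫ leftAdjointUniq hL adj
    exact ⟨hR.ofNatIsoRight eRF⟩
  · rintro ⟨adj'⟩
    exact ⟨F, F, ⟨adj⟩, ⟨adj'⟩, ⟨Iso.refl F⟩⟩

end CategoryTheory.Adjunction

/-- Given an adjunction `F ⊣ G`, the functor `F` is Frobenius if and only if `G` is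
Frobenius. -/
theorem frobenius_iff_of_adjunction {C D : Type*} [Category C] [Category D]
    (F : C ⥤ D) (G : D ⥤ C) (adj : F ⊣ G) :
    F.IsFrobenius ↔ G.IsFrobenius :=
  adj.isFrobenius_left_iff_nonempty_adjunction.trans
    adj.isFrobenius_right_iff_nonempty_adjunction.symm
end

section
/- A Frobenius monoidal functor F : C → D between rigid monoidal categories preserves left duals: for each object c of C there is an isomorphism F(cᵛ) ≅ F(c)ᵛ. -/
open CategoryTheory MonoidalCategory CategoryTheory.Functor

/-!
A Frobenius monoidal functor `F` sends an exact pairing `(coev, ev)` of `X` and `Y` to the exact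
pairing of `F X` and `F Y` with coevaluation `ε ≫ F coev ≫ δ` and evaluation `μ ≫ F ev ≫ η`.
In each zigzag identity the Frobenius equation trades the middle `δ, α, μ` for `μ, F α, δ`;
naturality then gathers everything inside `F` into the image of the zigzag identity of
`(coev, ev)`, and unitality of `μ` and `δ` removes what is left. Duals being unique up to
isomorphism, `F (cᘁ) ≅ (F c)ᘁ`.
-/

namespace CategoryTheory.Functor

open LaxMonoidal OplaxMonoidal

variable {C D : Type*} [Category C] [Category D] [MonoidalCategory C] [MonoidalCategory D]
  (F : C ⥤ D) [F.LaxMonoidal] [F.OplaxMonoidal]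

/-- The first Frobenius equation; it and `FrobeniusAssociativityInv` are the associativity
axioms of `LaxMonoidal` and `OplaxMonoidal` with `μ` and `δ` interleaved. -/
def FrobeniusAssociativity : Prop :=
  ∀ X Y Z : C,
    μ F (X ⊗ Y) Z ≫ F.map (α_ X Y Z).hom ≫ δ F X (Y ⊗ Z) =
      (δ F X Y ⊗ₘ 𝟙 (F.obj Z)) ≫
        (α_ (F.obj X) (F.obj Y) (F.obj Z)).hom ≫ (𝟙 (F.obj X) ⊗ₘ μ F Y Z)

def FrobeniusAssociativityInv : Prop :=
  ∀ X Y Z : C,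
    μ F X (Y ⊗ Z) ≫ F.map (α_ X Y Z).inv ≫ δ F (X ⊗ Y) Z =
      (𝟙 (F.obj X) ⊗ₘ δ F Y Z) ≫
        (α_ (F.obj X) (F.obj Y) (F.obj Z)).inv ≫ (μ F X Y ⊗ₘ 𝟙 (F.obj Z))

variable {F}

theorem map_evaluation_coevaluation (hF : F.FrobeniusAssociativity) {X Y : C}
    (coev : 𝟙_ C ⟶ X ⊗ Y) (ev : Y ⊗ X ⟶ 𝟙_ C)
    (h : coev ▷ X ≫ (α_ X Y X).hom ≫ X ◁ ev = (λ_ X).hom ≫ (ρ_ X).inv) :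
    (ε F ≫ F.map coev ≫ δ F X Y) ▷ F.obj X ≫ (α_ _ _ _).hom ≫
        F.obj X ◁ (μ F Y X ≫ F.map ev ≫ η F) =
      (λ_ (F.obj X)).hom ≫ (ρ_ (F.obj X)).inv := by
  have frob := hF X Y X
  simp only [tensorHom_id, id_tensorHom] at frob
  calc (ε F ≫ F.map coev ≫ δ F X Y) ▷ F.obj X ≫ (α_ _ _ _).hom ≫
        F.obj X ◁ (μ F Y X ≫ F.map ev ≫ η F)
      = ε F ▷ F.obj X ≫ F.map coev ▷ F.obj X ≫
          (δ F X Y ▷ F.obj X ≫ (α_ _ _ _).hom ≫ F.obj X ◁ μ F Y X) ≫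
          F.obj X ◁ F.map ev ≫ F.obj X ◁ η F := by
        simp only [MonoidalCategory.whiskerLeft_comp, comp_whiskerRight, Category.assoc]
    _ = ε F ▷ F.obj X ≫ μ F (𝟙_ C) X ≫
          F.map (coev ▷ X ≫ (α_ X Y X).hom ≫ X ◁ ev) ≫ δ F X (𝟙_ C) ≫ F.obj X ◁ η F := by
        simp only [← frob, Category.assoc, μ_natural_left_assoc, δ_natural_right_assoc,
          F.map_comp]
    _ = (λ_ (F.obj X)).hom ≫ (ρ_ (F.obj X)).inv := by
        simp only [h, F.map_comp, Category.assoc, LaxMonoidal.left_unitality_assoc,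
          OplaxMonoidal.right_unitality]

theorem map_coevaluation_evaluation (hF : F.FrobeniusAssociativityInv) {X Y : C}
    (coev : 𝟙_ C ⟶ X ⊗ Y) (ev : Y ⊗ X ⟶ 𝟙_ C)
    (h : Y ◁ coev ≫ (α_ Y X Y).inv ≫ ev ▷ Y = (ρ_ Y).hom ≫ (λ_ Y).inv) :
    F.obj Y ◁ (ε F ≫ F.map coev ≫ δ F X Y) ≫ (α_ _ _ _).inv ≫
        (μ F Y X ≫ F.map ev ≫ η F) ▷ F.obj Y =
      (ρ_ (F.obj Y)).hom ≫ (λ_ (F.obj Y)).inv := by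
  have frob := hF Y X Y
  simp only [tensorHom_id, id_tensorHom] at frob
  calc F.obj Y ◁ (ε F ≫ F.map coev ≫ δ F X Y) ≫ (α_ _ _ _).inv ≫
        (μ F Y X ≫ F.map ev ≫ η F) ▷ F.obj Y
      = F.obj Y ◁ ε F ≫ F.obj Y ◁ F.map coev ≫
          (F.obj Y ◁ δ F X Y ≫ (α_ _ _ _).inv ≫ μ F Y X ▷ F.obj Y) ≫
          F.map ev ▷ F.obj Y ≫ η F ▷ F.obj Y := by
        simp only [MonoidalCategory.whiskerLeft_comp, comp_whiskerRight, Category.assoc]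
    _ = F.obj Y ◁ ε F ≫ μ F Y (𝟙_ C) ≫
          F.map (Y ◁ coev ≫ (α_ Y X Y).inv ≫ ev ▷ Y) ≫ δ F (𝟙_ C) Y ≫ η F ▷ F.obj Y := by
        simp only [← frob, Category.assoc, μ_natural_right_assoc, δ_natural_left_assoc,
          F.map_comp]
    _ = (ρ_ (F.obj Y)).hom ≫ (λ_ (F.obj Y)).inv := by
        simp only [h, F.map_comp, Category.assoc, LaxMonoidal.right_unitality_assoc,
          OplaxMonoidal.left_unitality]

noncomputable abbrev mapExactPairingOfFrobenius (hF₁ : F.FrobeniusAssociativity)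
    (hF₂ : F.FrobeniusAssociativityInv) (X Y : C) [ExactPairing X Y] :
    ExactPairing (F.obj X) (F.obj Y) where
  coevaluation' := ε F ≫ F.map (η_ X Y) ≫ δ F X Y
  evaluation' := μ F Y X ≫ F.map (ε_ X Y) ≫ η F
  coevaluation_evaluation' :=
    map_coevaluation_evaluation hF₂ _ _ (ExactPairing.coevaluation_evaluation X Y)
  evaluation_coevaluation' :=
    map_evaluation_coevaluation hF₁ _ _ (ExactPairing.evaluation_coevaluation X Y)

end CategoryTheory.Functor

/-- A Frobenius monoidal functor `F : C ⥤ D` between rigid monoidal categories, i.e. a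
functor equipped with a lax monoidal structure `(ε, μ)` and an oplax monoidal structure
`(η, δ)` satisfying the two Frobenius compatibility equations, preserves (right) duals:
for every object `c` of `C` there is an isomorphism `F(cᵛ) ≅ F(c)ᵛ`. -/
theorem frobenius_monoidal_preserves_duals {C D : Type*} [Category C] [Category D]
    [MonoidalCategory C] [MonoidalCategory D] [RigidCategory C] [RigidCategory D]
    (F : C ⥤ D) [F.LaxMonoidal] [F.OplaxMonoidal]
    -- first Frobenius compatibility equation
    (frob₁ : ∀ X Y Z : C,
      LaxMonoidal.μ F (X ⊗ Y) Z ≫ F.map (α_ X Y Z).hom ≫ OplaxMonoidal.δ F X (Y ⊗ Z) =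
        (OplaxMonoidal.δ F X Y ⊗ₘ 𝟙 (F.obj Z)) ≫
          (α_ (F.obj X) (F.obj Y) (F.obj Z)).hom ≫ (𝟙 (F.obj X) ⊗ₘ LaxMonoidal.μ F Y Z))
    -- second Frobenius compatibility equation
    (frob₂ : ∀ X Y Z : C,
      LaxMonoidal.μ F X (Y ⊗ Z) ≫ F.map (α_ X Y Z).inv ≫ OplaxMonoidal.δ F (X ⊗ Y) Z =
        (𝟙 (F.obj X) ⊗ₘ OplaxMonoidal.δ F Y Z) ≫
          (α_ (F.obj X) (F.obj Y) (F.obj Z)).inv ≫ (LaxMonoidal.μ F X Y ⊗ₘ 𝟙 (F.obj Z))) :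
    ∀ c : C, Nonempty (F.obj (cᘁ) ≅ (F.obj c)ᘁ) :=
  fun c => ⟨rightDualIso (mapExactPairingOfFrobenius frob₁ frob₂ c cᘁ) HasRightDual.exact⟩
end

section
/- Let F : C → D be a strong monoidal functor between rigid monoidal categories admitting a right adjoint F^ra. If F^ra admits a Frobenius monoidal structure, then F is a Frobenius functor, i.e., F admits a left adjoint isomorphic to F^ra. -/
/-!
A functor `G` that is lax and oplax monoidal and satisfies the two Frobenius equations
sends an exact pairing `(X, Y)` to the exact pairing `(G X, G Y)` with coevaluation
`ε ≫ G η_ ≫ δ` and evaluation `μ ≫ G ε_ ≫ η`; strong monoidal functors are Frobenius.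
Taking mates with respect to exact pairings identifies `X ⟶ Y` with `Y' ⟶ X'`,
contravariantly functorially and compatibly with Frobenius functors. Hence
`(R d ⟶ c) ≃ (cᘁ ⟶ R dᘁ) ≃ (F cᘁ ⟶ dᘁ) ≃ (d ⟶ F c)`, naturally in `d` and `c`,
which makes `R` a left adjoint of `F`.
-/

open CategoryTheory MonoidalCategory CategoryTheory.Functor

namespace CategoryTheory

open Functor.LaxMonoidal Functor.OplaxMonoidal

class Functor.IsFrobenius_s4 {C D : Type*} [Category C] [Category D] [MonoidalCategory C]
    [MonoidalCategory D] (G : C ⥤ D) [G.LaxMonoidal] [G.OplaxMonoidal] : Prop where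
  μ_map_associator_hom_δ (X Y Z : C) :
    μ G (X ⊗ Y) Z ≫ G.map (α_ X Y Z).hom ≫ δ G X (Y ⊗ Z) =
      δ G X Y ▷ G.obj Z ≫ (α_ _ _ _).hom ≫ G.obj X ◁ μ G Y Z
  μ_map_associator_inv_δ (X Y Z : C) :
    μ G X (Y ⊗ Z) ≫ G.map (α_ X Y Z).inv ≫ δ G (X ⊗ Y) Z =
      G.obj X ◁ δ G Y Z ≫ (α_ _ _ _).inv ≫ μ G X Y ▷ G.obj Z

section Frobenius

variable {C D : Type*} [Category C] [Category D] [MonoidalCategory C] [MonoidalCategory D]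

instance Functor.Monoidal.isFrobenius (F : C ⥤ D) [F.Monoidal] : F.IsFrobenius_s4 where
  μ_map_associator_hom_δ X Y Z := by
    rw [Monoidal.map_associator]
    simp only [Category.assoc, Monoidal.μ_δ_assoc, Monoidal.μ_δ, Category.comp_id]
  μ_map_associator_inv_δ X Y Z := by
    rw [Monoidal.map_associator_inv]
    simp only [Category.assoc, Monoidal.μ_δ_assoc, Monoidal.μ_δ, Category.comp_id]

variable (G : C ⥤ D) [G.LaxMonoidal] [G.OplaxMonoidal] [G.IsFrobenius_s4]

instance Functor.IsFrobenius_s4.exactPairing (X Y : C) [ExactPairing X Y] :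
    ExactPairing (G.obj X) (G.obj Y) where
  coevaluation' := ε G ≫ G.map (η_ X Y) ≫ δ G X Y
  evaluation' := μ G Y X ≫ G.map (ε_ X Y) ≫ η G
  coevaluation_evaluation' := by
    simp only [MonoidalCategory.whiskerLeft_comp, comp_whiskerRight, Category.assoc]
    slice_lhs 3 5 => rw [← IsFrobenius_s4.μ_map_associator_inv_δ]
    slice_lhs 2 3 => rw [μ_natural_right]
    slice_lhs 5 6 => rw [δ_natural_left]
    slice_lhs 3 5 => rw [← G.map_comp, ← G.map_comp, ExactPairing.coevaluation_evaluation]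
    rw [G.map_comp]
    slice_lhs 1 3 => rw [← LaxMonoidal.right_unitality]
    slice_lhs 2 4 => rw [← OplaxMonoidal.left_unitality]
  evaluation_coevaluation' := by
    simp only [MonoidalCategory.whiskerLeft_comp, comp_whiskerRight, Category.assoc]
    slice_lhs 3 5 => rw [← IsFrobenius_s4.μ_map_associator_hom_δ]
    slice_lhs 2 3 => rw [μ_natural_left]
    slice_lhs 5 6 => rw [δ_natural_right]
    slice_lhs 3 5 => rw [← G.map_comp, ← G.map_comp, ExactPairing.evaluation_coevaluation]
    rw [G.map_comp]
    slice_lhs 1 3 => rw [← LaxMonoidal.left_unitality]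
    slice_lhs 2 4 => rw [← OplaxMonoidal.right_unitality]

end Frobenius

section Mates

variable {C : Type*} [Category C] [MonoidalCategory C]

/-- Mates with respect to arbitrary exact pairings; for the canonical ones this is
`rightAdjointMate`. -/
def dualHomEquiv (X X' Y Y' : C) [ExactPairing X X'] [ExactPairing Y Y'] :
    (X ⟶ Y) ≃ (Y' ⟶ X') :=
  (((λ_ X).symm.homCongr (Iso.refl Y)).trans (tensorRightHomEquiv (𝟙_ C) X X' Y)).trans
    (((ρ_ Y').symm.homCongr (Iso.refl X')).trans (tensorLeftHomEquiv (𝟙_ C) Y Y' X')).symm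

variable {X X' Y Y' Z Z' : C} [ExactPairing X X'] [ExactPairing Y Y'] [ExactPairing Z Z']

theorem dualHomEquiv_apply_eq_iff (f : X ⟶ Y) (f' : Y' ⟶ X') :
    dualHomEquiv X X' Y Y' f = f' ↔ η_ X X' ≫ f ▷ X' = η_ Y Y' ≫ Y ◁ f' := by
  rw [dualHomEquiv, Equiv.trans_apply, Equiv.symm_apply_eq]
  simp only [Equiv.trans_apply, Iso.homCongr_apply, tensorRightHomEquiv, tensorLeftHomEquiv,
    Equiv.coe_fn_mk, Iso.symm_inv, Iso.refl_hom, Category.comp_id]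
  congr! 1 <;> monoidal

theorem coevaluation_comp_whiskerLeft_dualHomEquiv (f : X ⟶ Y) :
    η_ Y Y' ≫ Y ◁ dualHomEquiv X X' Y Y' f = η_ X X' ≫ f ▷ X' :=
  ((dualHomEquiv_apply_eq_iff (Y' := Y') f _).mp rfl).symm

theorem dualHomEquiv_comp (f : X ⟶ Y) (g : Y ⟶ Z) :
    dualHomEquiv X X' Z Z' (f ≫ g) =
      dualHomEquiv Y Y' Z Z' g ≫ dualHomEquiv X X' Y Y' f := by
  rw [dualHomEquiv_apply_eq_iff, comp_whiskerRight, MonoidalCategory.whiskerLeft_comp,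
    ← reassoc_of% coevaluation_comp_whiskerLeft_dualHomEquiv (Y' := Y') f, whisker_exchange,
    ← reassoc_of% coevaluation_comp_whiskerLeft_dualHomEquiv (Y' := Z') g]

theorem dualHomEquiv_symm_comp (f' : Z' ⟶ Y') (g' : Y' ⟶ X') :
    (dualHomEquiv X X' Z Z').symm (f' ≫ g') =
      (dualHomEquiv X X' Y Y').symm g' ≫ (dualHomEquiv Y Y' Z Z').symm f' := by
  rw [Equiv.symm_apply_eq, dualHomEquiv_comp (Y' := Y'), Equiv.apply_symm_apply,
    Equiv.apply_symm_apply]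

theorem Functor.IsFrobenius_s4.map_dualHomEquiv {D : Type*} [Category D] [MonoidalCategory D]
    (G : C ⥤ D) [G.LaxMonoidal] [G.OplaxMonoidal] [G.IsFrobenius_s4] (f : X ⟶ Y) :
    dualHomEquiv (G.obj X) (G.obj X') (G.obj Y) (G.obj Y') (G.map f) =
      G.map (dualHomEquiv X X' Y Y' f) := by
  rw [dualHomEquiv_apply_eq_iff]
  change (ε G ≫ G.map (η_ X X') ≫ δ G X X') ≫ _ = (ε G ≫ G.map (η_ Y Y') ≫ δ G Y Y') ≫ _
  simp only [Category.assoc, δ_natural_left, δ_natural_right, ← G.map_comp_assoc,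
    coevaluation_comp_whiskerLeft_dualHomEquiv]

end Mates

variable {C D : Type*} [Category C] [Category D] [MonoidalCategory C] [MonoidalCategory D]
  [RightRigidCategory C] [RightRigidCategory D] {F : C ⥤ D} {R : D ⥤ C}
  [F.LaxMonoidal] [F.OplaxMonoidal] [F.IsFrobenius_s4]
  [R.LaxMonoidal] [R.OplaxMonoidal] [R.IsFrobenius_s4]

def Adjunction.symmOfIsFrobenius (adj : F ⊣ R) : R ⊣ F :=
  Adjunction.mkOfHomEquiv
    { homEquiv d c := ((dualHomEquiv (R.obj d) (R.obj dᘁ) c cᘁ).trans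
        (adj.homEquiv cᘁ dᘁ).symm).trans (dualHomEquiv d dᘁ (F.obj c) (F.obj cᘁ)).symm
      homEquiv_naturality_left_symm {d' d c} h x := by
        simp only [Equiv.symm_trans_apply, Equiv.symm_symm,
          dualHomEquiv_comp (Y := d) (Y' := dᘁ), adj.homEquiv_naturality_right,
          ← Functor.IsFrobenius_s4.map_dualHomEquiv,
          dualHomEquiv_symm_comp (Y := R.obj d) (Y' := R.obj dᘁ), Equiv.symm_apply_apply]
      homEquiv_naturality_right {d c c'} f g := by
        simp only [Equiv.trans_apply, dualHomEquiv_comp (Y := c) (Y' := cᘁ),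
          adj.homEquiv_naturality_left_symm, ← Functor.IsFrobenius_s4.map_dualHomEquiv,
          dualHomEquiv_symm_comp (Y := F.obj c) (Y' := F.obj cᘁ), Equiv.symm_apply_apply] }

end CategoryTheory

theorem frobenius_of_rightAdjoint_frobenius_monoidal_general {C D : Type*} [Category C] [Category D]
    [MonoidalCategory C] [MonoidalCategory D] [RigidCategory C] [RigidCategory D]
    (F : C ⥤ D) [F.Monoidal] (R : D ⥤ C) (adj : F ⊣ R)
    [R.LaxMonoidal] [R.OplaxMonoidal]
    -- first Frobenius compatibility equation for `R`
    (frob₁ : ∀ X Y Z : D,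
      LaxMonoidal.μ R (X ⊗ Y) Z ≫ R.map (α_ X Y Z).hom ≫ OplaxMonoidal.δ R X (Y ⊗ Z) =
        (OplaxMonoidal.δ R X Y ⊗ₘ 𝟙 (R.obj Z)) ≫
          (α_ (R.obj X) (R.obj Y) (R.obj Z)).hom ≫ (𝟙 (R.obj X) ⊗ₘ LaxMonoidal.μ R Y Z))
    -- second Frobenius compatibility equation for `R`
    (frob₂ : ∀ X Y Z : D,
      LaxMonoidal.μ R X (Y ⊗ Z) ≫ R.map (α_ X Y Z).inv ≫ OplaxMonoidal.δ R (X ⊗ Y) Z =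
        (𝟙 (R.obj X) ⊗ₘ OplaxMonoidal.δ R Y Z) ≫
          (α_ (R.obj X) (R.obj Y) (R.obj Z)).inv ≫ (LaxMonoidal.μ R X Y ⊗ₘ 𝟙 (R.obj Z))) :
    ∃ L : D ⥤ C, Nonempty (L ⊣ F) ∧ Nonempty (L ≅ R) := by
  have : R.IsFrobenius_s4 :=
    ⟨fun X Y Z => by simpa only [tensorHom_id, id_tensorHom] using frob₁ X Y Z,
      fun X Y Z => by simpa only [tensorHom_id, id_tensorHom] using frob₂ X Y Z⟩
  exact ⟨R, ⟨adj.symmOfIsFrobenius⟩, ⟨Iso.refl R⟩⟩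

/-- Let `F : C ⥤ D` be a strong monoidal functor between rigid monoidal categories with a
right adjoint `R = F^ra`, carrying the lax monoidal structure induced by the monoidal
adjunction `F ⊣ R`.  If `R` admits a Frobenius monoidal structure (an oplax monoidal
structure compatible with its lax monoidal structure via the two Frobenius equations),
then `F` is a Frobenius functor: it admits a left adjoint isomorphic to `R`. -/
theorem frobenius_of_rightAdjoint_frobenius_monoidal {C D : Type*} [Category C] [Category D]
    [MonoidalCategory C] [MonoidalCategory D] [RigidCategory C] [RigidCategory D]
    (F : C ⥤ D) [F.Monoidal] (R : D ⥤ C) (adj : F ⊣ R)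
    [R.LaxMonoidal] [adj.IsMonoidal] [R.OplaxMonoidal]
    -- first Frobenius compatibility equation for `R`
    (frob₁ : ∀ X Y Z : D,
      LaxMonoidal.μ R (X ⊗ Y) Z ≫ R.map (α_ X Y Z).hom ≫ OplaxMonoidal.δ R X (Y ⊗ Z) =
        (OplaxMonoidal.δ R X Y ⊗ₘ 𝟙 (R.obj Z)) ≫
          (α_ (R.obj X) (R.obj Y) (R.obj Z)).hom ≫ (𝟙 (R.obj X) ⊗ₘ LaxMonoidal.μ R Y Z))
    -- second Frobenius compatibility equation for `R`
    (frob₂ : ∀ X Y Z : D,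
      LaxMonoidal.μ R X (Y ⊗ Z) ≫ R.map (α_ X Y Z).inv ≫ OplaxMonoidal.δ R (X ⊗ Y) Z =
        (𝟙 (R.obj X) ⊗ₘ OplaxMonoidal.δ R Y Z) ≫
          (α_ (R.obj X) (R.obj Y) (R.obj Z)).inv ≫ (LaxMonoidal.μ R X Y ⊗ₘ 𝟙 (R.obj Z))) :
    ∃ L : D ⥤ C, Nonempty (L ⊣ F) ∧ Nonempty (L ≅ R) :=
  frobenius_of_rightAdjoint_frobenius_monoidal_general F R adj frob₁ frob₂
end

section
/- Let H be a finite-dimensional Hopf algebra, Λ a left integral and λ a right cointegral with λ(Λ) = 1. Then there exists a unique element g_H ∈ H (the distinguished grouplike element) such that h₁ λ(h₂) = λ(h) g_H for all h ∈ H; moreover g_H is grouplike and invertible. -/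
/-!
For `f ∈ H*` the convolution `f * λ` is again a right cointegral, and right cointegrals are unique
up to scalars: the map `f ↦ f(Λ₁) S(Λ₂)` from `H*` to `H` is onto, since `λ(hΛ₁) S(Λ₂) = h`, hence
injective by counting dimensions, and it sends every right cointegral `μ` to `μ(Λ) 1`.
Thus `f * λ = f(g) λ` with `g = Λ₁ λ(Λ₂)`, which is `h₁ λ(h₂) = λ(h) g` paired with `f`.
Applying `Δ` to this identity at `h = Λ` gives `Δ g = g ⊗ g`, and `ε(g) = λ(Λ) = 1`;
group-like elements are invertible with inverse `S g`.
-/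

open TensorProduct WithConv
open Coalgebra (comul counit)
open scoped Coalgebra

section Hit
variable {R C : Type*} [CommSemiring R] [AddCommMonoid C] [Module R C] [Coalgebra R C]

/- The hit actions of the dual algebra on a coalgebra: `f ⇀ c = c₁ f(c₂)` and
`c ↼ f = f(c₁) c₂`. -/
noncomputable def leftHit (f : Module.Dual R C) : C →ₗ[R] C :=
  (TensorProduct.rid R C).toLinearMap ∘ₗ TensorProduct.map LinearMap.id f ∘ₗ comul

noncomputable def rightHit (f : Module.Dual R C) : C →ₗ[R] C :=
  (TensorProduct.lid R C).toLinearMap ∘ₗ TensorProduct.map f LinearMap.id ∘ₗ comul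

lemma leftHit_eq_sum (f : Module.Dual R C) {c : C} {ι : Type*} (r : Coalgebra.Repr R c ι) :
    leftHit f c = ∑ i ∈ r.index, f (r.right i) • r.left i := by
  simp [leftHit, ← r.eq]

lemma rightHit_eq_sum (f : Module.Dual R C) {c : C} {ι : Type*} (r : Coalgebra.Repr R c ι) :
    rightHit f c = ∑ i ∈ r.index, f (r.left i) • r.right i := by
  simp [rightHit, ← r.eq]

lemma comul_comp_leftHit (f : Module.Dual R C) :
    comul ∘ₗ leftHit f = (leftHit f).lTensor C ∘ₗ comul := by
  set ρ : C ⊗[R] C →ₗ[R] C := (TensorProduct.rid R C).toLinearMap ∘ₗ TensorProduct.map .id f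
  have hnat : comul ∘ₗ ρ = (TensorProduct.rid R (C ⊗[R] C)).toLinearMap ∘ₗ
      TensorProduct.map .id f ∘ₗ comul.rTensor C := by
    ext; simp [ρ]
  have hassoc : (TensorProduct.rid R (C ⊗[R] C)).toLinearMap ∘ₗ TensorProduct.map .id f ∘ₗ
      (TensorProduct.assoc R C C C).symm.toLinearMap = ρ.lTensor C := by
    ext; simp [ρ]
  calc comul ∘ₗ leftHit f = (comul ∘ₗ ρ) ∘ₗ comul := rfl
    _ = ρ.lTensor C ∘ₗ comul.lTensor C ∘ₗ comul := by
      rw [hnat, ← hassoc]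
      simp only [LinearMap.comp_assoc, Coalgebra.coassoc_symm]
    _ = (leftHit f).lTensor C ∘ₗ comul := by
      rw [← LinearMap.comp_assoc, ← LinearMap.lTensor_comp]; rfl

lemma counit_leftHit (f : Module.Dual R C) (c : C) : counit (R := R) (leftHit f c) = f c := by
  rw [leftHit_eq_sum f (ℛ R c), map_sum]
  conv_rhs => rw [← Coalgebra.sum_counit_smul (ℛ R c), map_sum]
  simp [mul_comm]

lemma dual_apply_leftHit (φ f : Module.Dual R C) (c : C) :
    φ (leftHit f c) = (toConv φ * toConv f) c := by
  simp [leftHit_eq_sum f (ℛ R c), (ℛ R c).convMul_apply, mul_comm]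

lemma isGroupLikeElem_of_leftHit_eq_smul {f : Module.Dual R C} {g : C}
    (hg : ∀ c, leftHit f c = f c • g) {c₀ : C} (hc₀ : f c₀ = 1) : IsGroupLikeElem R g := by
  have hg₀ : leftHit f c₀ = g := by rw [hg, hc₀, one_smul]
  refine ⟨by rw [← hg₀, counit_leftHit, hc₀], ?_⟩
  calc comul g = (leftHit f).lTensor C (comul c₀) := by
        rw [← hg₀]; exact LinearMap.congr_fun (comul_comp_leftHit f) c₀
    _ = leftHit f c₀ ⊗ₜ g := by
        rw [leftHit_eq_sum f (ℛ R c₀), TensorProduct.sum_tmul, ← (ℛ R c₀).eq, map_sum]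
        simp [hg, TensorProduct.smul_tmul]
    _ = g ⊗ₜ g := by rw [hg₀]

end Hit

section Cointegral
variable {k H : Type*} [CommSemiring k] [Semiring H] [Algebra k H] [Coalgebra k H]

variable (k) in
def IsLeftIntegral (Λ : H) : Prop := ∀ h : H, h * Λ = counit (R := k) h • Λ

def IsRightCointegral (μ : Module.Dual k H) : Prop :=
  ∀ h : H, rightHit μ h = μ h • (1 : H)

lemma algebraMap_comp_convMul_id (μ : Module.Dual k H) :
    toConv (Algebra.linearMap k H ∘ₗ μ) * toConv LinearMap.id = toConv (rightHit μ) := by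
  ext h
  simp [(ℛ k h).convMul_apply, rightHit_eq_sum μ (ℛ k h), Algebra.smul_def]

lemma isRightCointegral_iff_convMul_id {μ : Module.Dual k H} :
    IsRightCointegral μ ↔ toConv (Algebra.linearMap k H ∘ₗ μ) * toConv LinearMap.id =
      toConv (Algebra.linearMap k H ∘ₗ μ) := by
  simp [algebraMap_comp_convMul_id, IsRightCointegral, WithConv.ext_iff, LinearMap.ext_iff,
    Algebra.smul_def]

lemma IsRightCointegral.convMul_left {μ : Module.Dual k H} (hμ : IsRightCointegral μ)
    (f : Module.Dual k H) : IsRightCointegral (toConv f * toConv μ).ofConv := by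
  rw [isRightCointegral_iff_convMul_id] at hμ ⊢
  have hdistrib : Algebra.linearMap k H ∘ₗ (toConv f * toConv μ).ofConv =
      (toConv (Algebra.linearMap k H ∘ₗ f) * toConv (Algebra.linearMap k H ∘ₗ μ)).ofConv :=
    LinearMap.algHom_comp_convMul_distrib (Algebra.ofId k H) (toConv f) (toConv μ)
  rw [hdistrib, toConv_ofConv, mul_assoc, hμ]

end Cointegral

section Frobenius
variable {k H : Type*} [CommSemiring k] [Semiring H] [HopfAlgebra k H]

noncomputable def frobeniusMap (Λ : H) : Module.Dual k H →ₗ[k] H where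
  toFun f := HopfAlgebra.antipode k (rightHit f Λ)
  map_add' f g := by simp [rightHit, TensorProduct.map_add_left]
  map_smul' c f := by simp [rightHit, TensorProduct.map_smul_left]

lemma frobeniusMap_apply (Λ : H) (f : Module.Dual k H) :
    frobeniusMap Λ f = HopfAlgebra.antipode k (rightHit f Λ) := rfl

lemma frobeniusMap_of_isRightCointegral {μ : Module.Dual k H} (hμ : IsRightCointegral μ)
    (Λ : H) : frobeniusMap Λ μ = μ Λ • 1 := by
  simp [frobeniusMap_apply, hμ Λ]

/- In the convolution algebra of `H →ₗ[k] H`, `F x = μ(h₁ x) h₂` satisfies `F * id = μ(h ·) 1`,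
so `F = μ(h ·) 1 * S`; evaluating at `Λ` gives `μ(hΛ₁) S(Λ₂) = F Λ = h`. -/
lemma frobeniusMap_comp_mulLeft {Λ : H} (hΛ : IsLeftIntegral k Λ) {μ : Module.Dual k H}
    (hμ : IsRightCointegral μ) (hμΛ : μ Λ = 1) (h : H) :
    frobeniusMap Λ (μ ∘ₗ LinearMap.mulLeft k h) = h := by
  set r := ℛ k h
  let F : H →ₗ[k] H := ∑ i ∈ r.index, (μ ∘ₗ LinearMap.mulLeft k (r.left i)).smulRight (r.right i)
  let A : H →ₗ[k] H := Algebra.linearMap k H ∘ₗ μ ∘ₗ LinearMap.mulLeft k h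
  have hF : toConv F * toConv LinearMap.id = toConv A := by
    ext x
    have hx := hμ (h * x)
    rw [rightHit, LinearMap.comp_apply, LinearMap.comp_apply, Bialgebra.comul_mul, ← r.eq,
      ← (ℛ k x).eq, Finset.sum_mul_sum] at hx
    simp only [Algebra.TensorProduct.tmul_mul_tmul, map_sum, TensorProduct.map_tmul,
      LinearMap.id_coe, id_eq, TensorProduct.lid_tmul, LinearEquiv.coe_coe] at hx
    rw [(ℛ k x).convMul_apply]
    simp only [F, A, LinearMap.sum_apply, LinearMap.id_apply, LinearMap.smulRight_apply,
      LinearMap.comp_apply, LinearMap.mulLeft_apply, Finset.sum_mul, smul_mul_assoc,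
      Algebra.linearMap_apply, ← Algebra.algebraMap_eq_smul_one] at hx ⊢
    rw [Finset.sum_comm, hx]
  have hFS : toConv F = toConv A * toConv (HopfAlgebra.antipode k) := by
    rw [← hF, mul_assoc, LinearMap.id_mul_antipode, mul_one]
  calc frobeniusMap Λ (μ ∘ₗ LinearMap.mulLeft k h)
      = (toConv A * toConv (HopfAlgebra.antipode k) : WithConv (H →ₗ[k] H)) Λ := by
        simp [frobeniusMap_apply, (ℛ k Λ).convMul_apply, rightHit_eq_sum _ (ℛ k Λ), A,
          ← Algebra.smul_def]
    _ = F Λ := by rw [← hFS]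
    _ = h := by simp [F, hΛ _, hμΛ, Coalgebra.sum_counit_smul]

end Frobenius

section FiniteDimensional
variable {k H : Type*} [Field k] [Ring H] [HopfAlgebra k H] [FiniteDimensional k H]
  {Λ : H} {μ : Module.Dual k H}

lemma frobeniusMap_injective (hΛ : IsLeftIntegral k Λ) (hμ : IsRightCointegral μ)
    (hμΛ : μ Λ = 1) : Function.Injective (frobeniusMap (k := k) Λ) :=
  (LinearMap.injective_iff_surjective_of_finrank_eq_finrank Subspace.dual_finrank_eq).mpr
    fun h ↦ ⟨_, frobeniusMap_comp_mulLeft hΛ hμ hμΛ h⟩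

lemma IsRightCointegral.eq_apply_smul {ν : Module.Dual k H} (hν : IsRightCointegral ν)
    (hΛ : IsLeftIntegral k Λ) (hμ : IsRightCointegral μ) (hμΛ : μ Λ = 1) : ν = ν Λ • μ :=
  frobeniusMap_injective hΛ hμ hμΛ <| by
    rw [map_smul, frobeniusMap_of_isRightCointegral hν, frobeniusMap_of_isRightCointegral hμ,
      hμΛ, one_smul]

lemma leftHit_eq_smul_leftHit (hΛ : IsLeftIntegral k Λ) (hμ : IsRightCointegral μ)
    (hμΛ : μ Λ = 1) (h : H) : leftHit μ h = μ h • leftHit μ Λ := by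
  refine Module.eval_apply_injective k (LinearMap.ext fun φ ↦ ?_)
  rw [Module.Dual.eval_apply, Module.Dual.eval_apply]
  have hφμ := (hμ.convMul_left φ).eq_apply_smul hΛ hμ hμΛ
  calc φ (leftHit μ h) = (toConv φ * toConv μ).ofConv h := dual_apply_leftHit φ μ h
    _ = ((toConv φ * toConv μ).ofConv Λ • μ) h := LinearMap.congr_fun hφμ h
    _ = φ (μ h • leftHit μ Λ) := by
      rw [LinearMap.smul_apply, smul_eq_mul, map_smul, dual_apply_leftHit, smul_eq_mul, mul_comm]

end FiniteDimensional

theorem exists_unique_distinguished_grouplike_general {k H : Type*} [Field k] [Ring H]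
    [HopfAlgebra k H] [Module.Finite k H]
    (Λ : H)
    (hint : ∀ h : H, h * Λ = (Coalgebra.counit (R := k) h : k) • Λ)
    (lam : H →ₗ[k] k)
    (hlam : ∀ h : H, (TensorProduct.lid k H)
        ((TensorProduct.map lam LinearMap.id) (Coalgebra.comul (R := k) h)) =
      lam h • (1 : H))
    (hpair : lam Λ = 1) :
    ∃ g : H,
      (∀ h : H, (TensorProduct.rid k H)
          ((TensorProduct.map LinearMap.id lam) (Coalgebra.comul (R := k) h)) =
        lam h • g) ∧
      Coalgebra.comul (R := k) g = g ⊗ₜ[k] g ∧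
      Coalgebra.counit (R := k) g = 1 ∧
      IsUnit g ∧
      ∀ g' : H,
        (∀ h : H, (TensorProduct.rid k H)
            ((TensorProduct.map LinearMap.id lam) (Coalgebra.comul (R := k) h)) =
          lam h • g') → g' = g := by
  have hg : ∀ h, leftHit lam h = lam h • leftHit lam Λ :=
    leftHit_eq_smul_leftHit hint hlam hpair
  have hgrouplike := isGroupLikeElem_of_leftHit_eq_smul hg hpair
  refine ⟨leftHit lam Λ, hg, hgrouplike.comul_eq_tmul_self, hgrouplike.counit_eq_one,
    hgrouplike.isUnit, fun g' hg' ↦ ?_⟩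
  have hg'Λ := hg' Λ
  rw [hpair, one_smul] at hg'Λ
  exact hg'Λ.symm

/-- Let `H` be a finite-dimensional Hopf algebra over a field `k`, `Λ` a nonzero left
integral and `λ` a right cointegral (`λ(h₁) h₂ = λ(h) 1` for all `h`) with `λ(Λ) = 1`.
Then there exists a unique element `g_H ∈ H` (the distinguished grouplike element) such
that `h₁ λ(h₂) = λ(h) g_H` for all `h ∈ H`; moreover `g_H` is grouplike
(`Δ(g_H) = g_H ⊗ g_H`, `ε(g_H) = 1`) and invertible. -/
theorem exists_unique_distinguished_grouplike {k H : Type*} [Field k] [Ring H]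
    [HopfAlgebra k H] [Module.Finite k H]
    (Λ : H) (hΛ : Λ ≠ 0)
    (hint : ∀ h : H, h * Λ = (Coalgebra.counit (R := k) h : k) • Λ)
    (lam : H →ₗ[k] k)
    (hlam : ∀ h : H, (TensorProduct.lid k H)
        ((TensorProduct.map lam LinearMap.id) (Coalgebra.comul (R := k) h)) =
      lam h • (1 : H))
    (hpair : lam Λ = 1) :
    ∃ g : H,
      (∀ h : H, (TensorProduct.rid k H)
          ((TensorProduct.map LinearMap.id lam) (Coalgebra.comul (R := k) h)) =
        lam h • g) ∧
      Coalgebra.comul (R := k) g = g ⊗ₜ[k] g ∧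
      Coalgebra.counit (R := k) g = 1 ∧
      IsUnit g ∧
      ∀ g' : H,
        (∀ h : H, (TensorProduct.rid k H)
            ((TensorProduct.map LinearMap.id lam) (Coalgebra.comul (R := k) h)) =
          lam h • g') → g' = g :=
  exists_unique_distinguished_grouplike_general Λ hint lam hlam hpair
end

section
/- Let H be a finite-dimensional Hopf algebra and L a left H-comodule algebra. Then L ⊗ k with the structure maps from the α-induction functor Ψ is well-defined: for a Yetter–Drinfeld module (X, ·, δ), the space X ⊗ L with actions s ≻ (x ⊗ l) ≺ t := s₋₁·x ⊗ s₀ l t and coaction ρ(x ⊗ l) := x₋₁ l₋₁ ⊗ x₀ ⊗ l₀ is an object of the category of H-comodule L-bimodules (i.e., an L-bimodule in H-comodules). -/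
open TensorProduct

section

variable (k : Type*) [Field k] (H : Type*) [Ring H] [HopfAlgebra k H]
variable (X : Type*) [AddCommGroup X] [Module k X]
variable (L : Type*) [Ring L] [Algebra k L]

/-- Point-free comodule axioms for a coaction `δ : X →ₗ H ⊗ X`. -/
def IsComodule (δ : X →ₗ[k] H ⊗[k] X) : Prop :=
  ((TensorProduct.assoc k H H X).toLinearMap ∘ₗ
      (LinearMap.rTensor X (Coalgebra.comul (R := k))) ∘ₗ δ =
    (LinearMap.lTensor H δ) ∘ₗ δ) ∧
  ((TensorProduct.lid k X).toLinearMap ∘ₗ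
      (LinearMap.rTensor X (Coalgebra.counit (R := k))) ∘ₗ δ = LinearMap.id)

/-- Module axioms for an action `a : H ⊗ X →ₗ X`. -/
def IsModuleAction (a : H ⊗[k] X →ₗ[k] X) : Prop :=
  (∀ x : X, a ((1 : H) ⊗ₜ[k] x) = x) ∧
  (∀ (g h : H) (x : X), a ((g * h) ⊗ₜ[k] x) = a (g ⊗ₜ[k] a (h ⊗ₜ[k] x)))

/-- The right-hand side `h₁ x₋₁ S(h₃) ⊗ h₂ · x₀` of the Yetter–Drinfeld condition,
as a linear endomorphism of `H ⊗ X`. -/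
noncomputable def ydRHS (a : H ⊗[k] X →ₗ[k] X) (δ : X →ₗ[k] H ⊗[k] X) :
    H ⊗[k] X →ₗ[k] H ⊗[k] X :=
  (LinearMap.rTensor X (LinearMap.mul' k H)) ∘ₗ
  (TensorProduct.assoc k H H X).symm.toLinearMap ∘ₗ
  (LinearMap.rTensor (H ⊗[k] X) (LinearMap.mul' k H)) ∘ₗ
  (LinearMap.lTensor (H ⊗[k] H)
    ((TensorProduct.map (HopfAlgebra.antipode k : H →ₗ[k] H) a) ∘ₗ
     (TensorProduct.assoc k H H X).toLinearMap ∘ₗ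
     (LinearMap.rTensor X (TensorProduct.comm k H H).toLinearMap))) ∘ₗ
  (TensorProduct.tensorTensorTensorComm k H (H ⊗[k] H) H X).toLinearMap ∘ₗ
  (TensorProduct.map
    ((LinearMap.lTensor H (Coalgebra.comul (R := k))) ∘ₗ (Coalgebra.comul (R := k))) δ)

/-- `(a, δ)` is a Yetter–Drinfeld module structure on `X`. -/
noncomputable def IsYetterDrinfeld (a : H ⊗[k] X →ₗ[k] X) (δ : X →ₗ[k] H ⊗[k] X) : Prop :=
  IsModuleAction k H X a ∧ IsComodule k H X δ ∧ δ ∘ₗ a = ydRHS k H X a δ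

/-- `δL` makes the `k`-algebra `L` a left `H`-comodule algebra. -/
def IsComoduleAlgebra (δL : L →ₗ[k] H ⊗[k] L) : Prop :=
  IsComodule k H L δL ∧ (δL 1 = 1) ∧ (∀ a b : L, δL (a * b) = δL a * δL b)

variable (a : H ⊗[k] X →ₗ[k] X) (δX : X →ₗ[k] H ⊗[k] X) (δL : L →ₗ[k] H ⊗[k] L)

/-- The left `L`-action `l ≻ (x ⊗ m) = l₋₁ · x ⊗ l₀ m` on `X ⊗ L`. -/
noncomputable def lactL : L →ₗ[k] (X ⊗[k] L) →ₗ[k] (X ⊗[k] L) :=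
  (TensorProduct.homTensorHomMap (RingHom.id k) X L X L) ∘ₗ
    (TensorProduct.map (TensorProduct.curry a) (LinearMap.mul k L)) ∘ₗ δL

/-- The right `L`-action `(x ⊗ m) ≺ t = x ⊗ m t` on `X ⊗ L`. -/
noncomputable def ractL : L →ₗ[k] (X ⊗[k] L) →ₗ[k] (X ⊗[k] L) :=
  (LinearMap.lTensorHom X) ∘ₗ (LinearMap.mul k L).flip

/-- The `H`-coaction `ρ(x ⊗ l) = x₋₁ l₋₁ ⊗ (x₀ ⊗ l₀)` on `X ⊗ L`. -/
noncomputable def coactP : (X ⊗[k] L) →ₗ[k] H ⊗[k] (X ⊗[k] L) :=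
  (TensorProduct.map (LinearMap.mul' k H) LinearMap.id) ∘ₗ
    (TensorProduct.tensorTensorTensorComm k H X H L).toLinearMap ∘ₗ
    (TensorProduct.map δX δL)

/-- `π ⊗ q ↦ a₋₁ π ⊗ a₀ ≻ q` on `H ⊗ (X ⊗ L)`. -/
noncomputable def AA (l : L) : (H ⊗[k] (X ⊗[k] L)) →ₗ[k] (H ⊗[k] (X ⊗[k] L)) :=
  (TensorProduct.homTensorHomMap (RingHom.id k) H (X ⊗[k] L) H (X ⊗[k] L))
    ((TensorProduct.map (LinearMap.mul k H) (lactL k H X L a δL)) (δL l))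

/-- `π ⊗ q ↦ π b₋₁ ⊗ q ≺ b₀` on `H ⊗ (X ⊗ L)`. -/
noncomputable def BB (l : L) : (H ⊗[k] (X ⊗[k] L)) →ₗ[k] (H ⊗[k] (X ⊗[k] L)) :=
  (TensorProduct.homTensorHomMap (RingHom.id k) H (X ⊗[k] L) H (X ⊗[k] L))
    ((TensorProduct.map ((LinearMap.mul k H).flip) (ractL k X L)) (δL l))


/-!
The left action `s ≻ -` is the composite of algebra maps
`L → H ⊗ L → End X ⊗ End L → End (X ⊗ L)`, hence multiplicative, and it commutes with `- ≺ t`,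
which only acts on the `L`-leg. The coaction is the tensor product of the comodules `X` and `L`,
again a comodule because `Δ` and `ε` are multiplicative. Compatibility with `≺` is
multiplicativity of `δL`. For compatibility with `≻`, coassociativity of `δL` rewrites
`s₋₁ ⊗ δL s₀` as `s₋₁₁ ⊗ s₋₁₂ ⊗ s₀`, after which the Yetter–Drinfeld condition is used in the
equivalent form `(g₁·x)₋₁ g₂ ⊗ (g₁·x)₀ = g₁ x₋₁ ⊗ g₂·x₀`; this form follows from the original one
and the Hopf identity `h₁ ⊗ h₂ ⊗ S(h₃) h₄ = h₁ ⊗ h₂ ⊗ 1`.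
-/

open LinearMap

section TensorMul

variable {R A B M N : Type*} [CommSemiring R] [Semiring A] [Algebra R A] [Semiring B]
  [Algebra R B] [AddCommMonoid M] [Module R M] [AddCommMonoid N] [Module R N]

variable (R A M N) in
noncomputable def tensorTensorMul : (A ⊗[R] M) ⊗[R] (A ⊗[R] N) →ₗ[R] A ⊗[R] (M ⊗[R] N) :=
  map (mul' R A) LinearMap.id ∘ₗ (tensorTensorTensorComm R A M A N).toLinearMap

@[simp]
lemma tensorTensorMul_tmul (g h : A) (m : M) (n : N) :
    tensorTensorMul R A M N ((g ⊗ₜ m) ⊗ₜ (h ⊗ₜ n)) = (g * h) ⊗ₜ (m ⊗ₜ n) := by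
  simp [tensorTensorMul]

lemma tensorTensorMul_comp_map_lTensor {M' N' : Type*} [AddCommMonoid M'] [Module R M']
    [AddCommMonoid N'] [Module R N'] (f : M →ₗ[R] M') (g : N →ₗ[R] N') :
    tensorTensorMul R A M' N' ∘ₗ map (f.lTensor A) (g.lTensor A) =
      (map f g).lTensor A ∘ₗ tensorTensorMul R A M N := by
  ext; simp

variable (R A M) in
noncomputable def tensorMulRight : (A ⊗[R] M) ⊗[R] A →ₗ[R] A ⊗[R] M :=
  lift ((rTensorHom M ∘ₗ (mul R A).flip).flip)

@[simp]
lemma tensorMulRight_tmul (u : A ⊗[R] M) (b : A) :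
    tensorMulRight R A M (u ⊗ₜ b) = (mulRight R b).rTensor M u := rfl

lemma tensorTensorMul_map_mulRight_assoc_tmul (f : A →ₗ[R] A ⊗[R] M) (v : A ⊗[R] B)
    (w : A ⊗[R] A) (m : B) :
    tensorTensorMul R A M B (map f (mulRight R v) (TensorProduct.assoc R A A B (w ⊗ₜ m))) =
      tensorTensorMul R A M B (tensorMulRight R A M (f.rTensor A w) ⊗ₜ ((1 ⊗ₜ m) * v)) := by
  induction w using TensorProduct.induction_on with
  | zero => simp
  | add => simp_all [add_tmul]
  | tmul p q =>
    simp only [TensorProduct.assoc_tmul, map_tmul, rTensor_tmul, tensorMulRight_tmul,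
      mulRight_apply]
    induction f p using TensorProduct.induction_on with
    | zero => simp
    | add => simp_all [add_tmul]
    | tmul h y =>
      induction v using TensorProduct.induction_on with
      | zero => simp
      | add => simp_all [mul_add, tmul_add]
      | tmul h' n => simp [mul_assoc]

lemma tensorTensorMul_homTensorHomMap_tmul_mul (φ : A →ₗ[R] Module.End R M) (w : A ⊗[R] A)
    (m : B) (u : A ⊗[R] M) (v : A ⊗[R] B) :
    tensorTensorMul R A M B
        (homTensorHomMap (RingHom.id R) A M A M (map (mul R A) φ w) u ⊗ₜ ((1 ⊗ₜ m) * v)) =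
      homTensorHomMap (RingHom.id R) A (M ⊗[R] B) A (M ⊗[R] B)
        (map (mul R A) (homTensorHomMap (RingHom.id R) M B M B ∘ₗ map φ (mul R B))
          (TensorProduct.assoc R A A B (w ⊗ₜ m)))
        (tensorTensorMul R A M B (u ⊗ₜ v)) := by
  induction w using TensorProduct.induction_on with
  | zero => simp
  | add => simp_all [add_tmul]
  | tmul g₁ g₂ =>
    induction u using TensorProduct.induction_on with
    | zero => simp
    | add => simp_all [add_tmul]
    | tmul h y =>
      induction v using TensorProduct.induction_on with
      | zero => simp
      | add => simp_all [mul_add, tmul_add]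
      | tmul h' n => simp [mul_assoc]

end TensorMul

section Bialgebra

variable {R A M N : Type*} [CommSemiring R] [Semiring A] [Bialgebra R A]
  [AddCommMonoid M] [Module R M] [AddCommMonoid N] [Module R N]

lemma tensorTensorMul_comp_comul :
    (TensorProduct.assoc R A A (M ⊗[R] N)).toLinearMap ∘ₗ
        (Coalgebra.comul (R := R) (A := A)).rTensor (M ⊗[R] N) ∘ₗ tensorTensorMul R A M N =
      (tensorTensorMul R A M N).lTensor A ∘ₗ tensorTensorMul R A (A ⊗[R] M) (A ⊗[R] N) ∘ₗ
        map ((TensorProduct.assoc R A A M).toLinearMap ∘ₗ (Coalgebra.comul (R := R)).rTensor M)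
          ((TensorProduct.assoc R A A N).toLinearMap ∘ₗ (Coalgebra.comul (R := R)).rTensor N) := by
  refine TensorProduct.ext_fourfold' fun g m h n => ?_
  simp only [coe_comp, Function.comp_apply, LinearEquiv.coe_coe, tensorTensorMul_tmul,
    rTensor_tmul, Bialgebra.comul_mul, map_tmul]
  generalize Coalgebra.comul (R := R) g = G
  generalize Coalgebra.comul (R := R) h = G'
  induction G using TensorProduct.induction_on with
  | zero => simp
  | add => simp_all [add_mul, add_tmul]
  | tmul g₁ g₂ =>
    induction G' using TensorProduct.induction_on with
    | zero => simp
    | add => simp_all [mul_add, add_tmul, tmul_add]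
    | tmul h₁ h₂ => simp

lemma tensorTensorMul_comp_counit :
    (TensorProduct.lid R (M ⊗[R] N)).toLinearMap ∘ₗ
        (Coalgebra.counit (R := R) (A := A)).rTensor (M ⊗[R] N) ∘ₗ tensorTensorMul R A M N =
      map ((TensorProduct.lid R M).toLinearMap ∘ₗ (Coalgebra.counit (R := R)).rTensor M)
        ((TensorProduct.lid R N).toLinearMap ∘ₗ (Coalgebra.counit (R := R)).rTensor N) := by
  refine TensorProduct.ext_fourfold' fun g m h n => ?_
  simp [Bialgebra.counit_mul, ← smul_tmul', smul_smul, mul_comm]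

end Bialgebra

-- `h₁ ⊗ h₂ ⊗ S(h₃) h₄ = h₁ ⊗ h₂ ⊗ 1`
theorem HopfAlgebra.lTensor_lTensor_mul_antipode_rTensor_comul {R A : Type*} [CommSemiring R]
    [Semiring A] [HopfAlgebra R A] :
    ((mul' R A ∘ₗ (HopfAlgebra.antipode R).rTensor A).lTensor A).lTensor A ∘ₗ
        (TensorProduct.assoc R A A A).toLinearMap.lTensor A ∘ₗ
        (TensorProduct.assoc R A (A ⊗[R] A) A).toLinearMap ∘ₗ
        ((Coalgebra.comul (R := R)).lTensor A ∘ₗ Coalgebra.comul (R := R)).rTensor A ∘ₗ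
        Coalgebra.comul (R := R) =
      ((TensorProduct.mk R A A).flip 1).lTensor A ∘ₗ Coalgebra.comul (R := R) := by
  simp only [coassoc_simps]
  rw [← rTensor_def, HopfAlgebra.mul_antipode_rTensor_comul]
  congr 2
  ext x
  rw [comp_apply, ← lTensor_def, lTensor_comp_apply, Coalgebra.lTensor_counit_comul]
  simp

section

variable {k H X L a δX δL}

theorem IsComodule.tensor {M N : Type*} [AddCommGroup M] [Module k M] [AddCommGroup N]
    [Module k N] {δM : M →ₗ[k] H ⊗[k] M} {δN : N →ₗ[k] H ⊗[k] N}
    (hM : IsComodule k H M δM) (hN : IsComodule k H N δN) :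
    IsComodule k H (M ⊗[k] N) (tensorTensorMul k H M N ∘ₗ map δM δN) := by
  constructor
  · calc _ = ((TensorProduct.assoc k H H (M ⊗[k] N)).toLinearMap ∘ₗ
              (Coalgebra.comul (R := k)).rTensor (M ⊗[k] N) ∘ₗ tensorTensorMul k H M N) ∘ₗ
            map δM δN := by simp only [comp_assoc]
      _ = (tensorTensorMul k H M N).lTensor H ∘ₗ tensorTensorMul k H (H ⊗[k] M) (H ⊗[k] N) ∘ₗ
            map ((TensorProduct.assoc k H H M).toLinearMap ∘ₗ
                (Coalgebra.comul (R := k)).rTensor M ∘ₗ δM)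
              ((TensorProduct.assoc k H H N).toLinearMap ∘ₗ
                (Coalgebra.comul (R := k)).rTensor N ∘ₗ δN) := by
          rw [tensorTensorMul_comp_comul]; simp only [comp_assoc, map_comp]
      _ = (tensorTensorMul k H M N).lTensor H ∘ₗ
            (tensorTensorMul k H (H ⊗[k] M) (H ⊗[k] N) ∘ₗ map (δM.lTensor H) (δN.lTensor H)) ∘ₗ
              map δM δN := by
          rw [hM.1, hN.1, map_comp]; simp only [comp_assoc]
      _ = _ := by
          rw [tensorTensorMul_comp_map_lTensor, lTensor_comp]; simp only [comp_assoc]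
  · calc _ = ((TensorProduct.lid k (M ⊗[k] N)).toLinearMap ∘ₗ
              (Coalgebra.counit (R := k)).rTensor (M ⊗[k] N) ∘ₗ tensorTensorMul k H M N) ∘ₗ
            map δM δN := by simp only [comp_assoc]
      _ = map ((TensorProduct.lid k M).toLinearMap ∘ₗ (Coalgebra.counit (R := k)).rTensor M ∘ₗ δM)
            ((TensorProduct.lid k N).toLinearMap ∘ₗ
              (Coalgebra.counit (R := k)).rTensor N ∘ₗ δN) := by
          rw [tensorTensorMul_comp_counit]; simp only [comp_assoc, map_comp]
      _ = _ := by rw [hM.2, hN.2, map_id]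

lemma tensorMulRight_rTensor_ydRHS (x : X) (w : H ⊗[k] H) :
    tensorMulRight k H X ((ydRHS k H X a δX ∘ₗ (TensorProduct.mk k H X).flip x).rTensor H w) =
      (tensorMulRight k H X ∘ₗ (applyₗ (δX x) ∘ₗ homTensorHomMap (RingHom.id k) H X H X ∘ₗ
        map (mul k H) (TensorProduct.curry a)).rTensor H ∘ₗ
        (TensorProduct.assoc k H H H).symm.toLinearMap)
      (((mul' k H ∘ₗ (HopfAlgebra.antipode k).rTensor H).lTensor H).lTensor H
        ((TensorProduct.assoc k H H H).toLinearMap.lTensor H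
        ((TensorProduct.assoc k H (H ⊗[k] H) H)
        (((Coalgebra.comul (R := k)).lTensor H ∘ₗ Coalgebra.comul (R := k)).rTensor H w)))) := by
  induction w using TensorProduct.induction_on with
  | zero => simp
  | add => simp_all
  | tmul p t =>
    simp only [ydRHS, coe_comp, Function.comp_apply, map_tmul, rTensor_tmul, mk_apply, flip_apply]
    generalize (lTensor H (Coalgebra.comul (R := k))) (Coalgebra.comul (R := k) p) = W
    generalize δX x = v
    induction W using TensorProduct.induction_on with
    | zero => simp
    | add => simp_all [add_tmul]
    | tmul p' W' =>
      induction W' using TensorProduct.induction_on with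
      | zero => simp
      | add => simp_all [add_tmul, tmul_add]
      | tmul q r =>
        induction v using TensorProduct.induction_on with
        | zero => simp
        | add => simp_all [tmul_add]
        | tmul y x₀ => simp [mul_assoc]

-- The Yetter–Drinfeld condition in the form `(g₁·x)₋₁ g₂ ⊗ (g₁·x)₀ = g₁ x₋₁ ⊗ g₂·x₀`.
theorem tensorMulRight_rTensor_comul (hyd : δX ∘ₗ a = ydRHS k H X a δX) (g : H) (x : X) :
    tensorMulRight k H X ((δX ∘ₗ a ∘ₗ (TensorProduct.mk k H X).flip x).rTensor H
        (Coalgebra.comul (R := k) g)) =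
      homTensorHomMap (RingHom.id k) H X H X
        (map (mul k H) (TensorProduct.curry a) (Coalgebra.comul (R := k) g)) (δX x) := by
  have hP := LinearMap.congr_fun
    (HopfAlgebra.lTensor_lTensor_mul_antipode_rTensor_comul (R := k) (A := H)) g
  simp only [coe_comp, Function.comp_apply, LinearEquiv.coe_coe] at hP
  rw [← comp_assoc, hyd, tensorMulRight_rTensor_ydRHS, hP]
  induction Coalgebra.comul (R := k) g using TensorProduct.induction_on with
  | zero => simp
  | add => simp_all
  | tmul p q => simp

lemma lactL_tmul (s : L) (x : X) (l : L) :
    lactL k H X L a δL s (x ⊗ₜ l) =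
      map (a ∘ₗ (TensorProduct.mk k H X).flip x) (mulRight k l) (δL s) := by
  rw [lactL, coe_comp, Function.comp_apply, coe_comp, Function.comp_apply]
  induction δL s using TensorProduct.induction_on with
  | zero => simp
  | add => simp_all
  | tmul g m => simp

@[simp]
lemma ractL_tmul (t : L) (x : X) (l : L) : ractL k X L t (x ⊗ₜ l) = x ⊗ₜ (l * t) := rfl

lemma ractL_one : ractL k X L 1 = LinearMap.id := by
  ext; simp

lemma ractL_mul (s t : L) : ractL k X L (s * t) = ractL k X L t ∘ₗ ractL k X L s := by
  ext; simp [mul_assoc]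

lemma lactL_comp_ractL (s t : L) :
    lactL k H X L a δL s ∘ₗ ractL k X L t = ractL k X L t ∘ₗ lactL k H X L a δL s := by
  refine TensorProduct.ext' fun x l => ?_
  simp only [coe_comp, Function.comp_apply, ractL_tmul, lactL_tmul]
  induction δL s using TensorProduct.induction_on with
  | zero => simp
  | add => simp_all
  | tmul g m => simp [mul_assoc]

noncomputable def IsModuleAction.toAlgHom (ha : IsModuleAction k H X a) :
    H →ₐ[k] Module.End k X :=
  AlgHom.ofLinearMap (TensorProduct.curry a) (LinearMap.ext ha.1)
    (fun g h => LinearMap.ext (ha.2 g h))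

noncomputable def lactAlgHom (ha : IsModuleAction k H X a) (h1 : δL 1 = 1)
    (hmul : ∀ s t : L, δL (s * t) = δL s * δL t) : L →ₐ[k] Module.End k (X ⊗[k] L) :=
  Module.endTensorEndAlgHom.comp
    ((Algebra.TensorProduct.map ha.toAlgHom (Algebra.lmul k L)).comp
      (AlgHom.ofLinearMap δL h1 hmul))

lemma lactAlgHom_apply (ha : IsModuleAction k H X a) (h1 : δL 1 = 1)
    (hmul : ∀ s t : L, δL (s * t) = δL s * δL t) (s : L) :
    lactAlgHom ha h1 hmul s = lactL k H X L a δL s := by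
  refine TensorProduct.ext' fun x l => ?_
  rw [lactL_tmul]
  simp only [lactAlgHom, AlgHom.comp_apply, AlgHom.ofLinearMap_apply]
  induction δL s using TensorProduct.induction_on with
  | zero => simp
  | add => simp_all
  | tmul g m => rfl

lemma coactP_eq : coactP k H X L δX δL = tensorTensorMul k H X L ∘ₗ map δX δL := rfl

lemma coactP_comp_ractL (hmul : ∀ s t : L, δL (s * t) = δL s * δL t) (t : L) :
    coactP k H X L δX δL ∘ₗ ractL k X L t = BB k H X L δL t ∘ₗ coactP k H X L δX δL := by
  refine TensorProduct.ext' fun x l => ?_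
  simp only [coactP_eq, BB, coe_comp, Function.comp_apply, ractL_tmul, map_tmul, hmul]
  induction δL t using TensorProduct.induction_on with
  | zero => simp
  | add => simp_all [mul_add, tmul_add]
  | tmul h n =>
    induction δX x using TensorProduct.induction_on with
    | zero => simp
    | add => simp_all [add_tmul]
    | tmul g y =>
      induction δL l using TensorProduct.induction_on with
      | zero => simp
      | add => simp_all [add_mul, tmul_add]
      | tmul g' m => simp [mul_assoc]

lemma coactP_map_mulRight (hmul : ∀ s t : L, δL (s * t) = δL s * δL t) (x : X) (l : L)
    (w : H ⊗[k] L) :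
    coactP k H X L δX δL (map (a ∘ₗ (TensorProduct.mk k H X).flip x) (mulRight k l) w) =
      tensorTensorMul k H X L
        (map (δX ∘ₗ a ∘ₗ (TensorProduct.mk k H X).flip x) (mulRight k (δL l))
          (δL.lTensor H w)) := by
  induction w using TensorProduct.induction_on with
  | zero => simp
  | add => simp_all
  | tmul g m => simp [coactP_eq, hmul]

lemma AA_eq (s : L) :
    AA k H X L a δL s = homTensorHomMap (RingHom.id k) H (X ⊗[k] L) H (X ⊗[k] L)
      (map (mul k H) (homTensorHomMap (RingHom.id k) X L X L ∘ₗ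
        map (TensorProduct.curry a) (mul k L)) (δL.lTensor H (δL s))) := by
  rw [AA, lactL, map_lTensor]
  rfl

lemma coactP_comp_lactL (hyd : δX ∘ₗ a = ydRHS k H X a δX)
    (hcoL : (TensorProduct.assoc k H H L).toLinearMap ∘ₗ
      (Coalgebra.comul (R := k)).rTensor L ∘ₗ δL = δL.lTensor H ∘ₗ δL)
    (hmul : ∀ s t : L, δL (s * t) = δL s * δL t) (s : L) :
    coactP k H X L δX δL ∘ₗ lactL k H X L a δL s = AA k H X L a δL s ∘ₗ coactP k H X L δX δL := by
  refine TensorProduct.ext' fun x l => ?_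
  have hco := LinearMap.congr_fun hcoL s
  simp only [coe_comp, Function.comp_apply, LinearEquiv.coe_coe] at hco
  simp only [coe_comp, Function.comp_apply, lactL_tmul, coactP_map_mulRight hmul, AA_eq, ← hco]
  induction δL s using TensorProduct.induction_on with
  | zero => simp
  | add => simp_all
  | tmul g m =>
    rw [rTensor_tmul, tensorTensorMul_map_mulRight_assoc_tmul, tensorMulRight_rTensor_comul hyd,
      tensorTensorMul_homTensorHomMap_tmul_mul, coactP_eq]
    rfl

end

theorem alphaInduction_is_relative_Hopf_bimodule
    (hX : IsYetterDrinfeld k H X a δX) (hL : IsComoduleAlgebra k H L δL) :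
    -- `≻` is a left `L`-action
    (lactL k H X L a δL 1 = LinearMap.id) ∧
    (∀ s t : L, lactL k H X L a δL (s * t) =
      (lactL k H X L a δL s) ∘ₗ (lactL k H X L a δL t)) ∧
    -- `≺` is a right `L`-action
    (ractL k X L 1 = LinearMap.id) ∧
    (∀ s t : L, ractL k X L (s * t) = (ractL k X L t) ∘ₗ (ractL k X L s)) ∧
    -- the two actions commute, so `X ⊗ L` is an `L`-bimodule
    (∀ s t : L, (lactL k H X L a δL s) ∘ₗ (ractL k X L t) =
      (ractL k X L t) ∘ₗ (lactL k H X L a δL s)) ∧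
    -- the coaction is a comodule structure
    (IsComodule k H (X ⊗[k] L) (coactP k H X L δX δL)) ∧
    -- compatibility `δ(s ≻ p ≺ t) = s₋₁ p₋₁ t₋₁ ⊗ (s₀ ≻ p₀ ≺ t₀)`
    (∀ s t : L,
      (coactP k H X L δX δL) ∘ₗ (lactL k H X L a δL s) ∘ₗ (ractL k X L t) =
        (AA k H X L a δL s) ∘ₗ (BB k H X L δL t) ∘ₗ (coactP k H X L δX δL)) := by
  obtain ⟨ha, hcoX, hyd⟩ := hX
  obtain ⟨hcoL, h1, hmul⟩ := hL
  refine ⟨?_, fun s t => ?_, ractL_one, ractL_mul, lactL_comp_ractL, hcoX.tensor hcoL,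
    fun s t => ?_⟩
  · rw [← lactAlgHom_apply ha h1 hmul, map_one]
    rfl
  · rw [← lactAlgHom_apply ha h1 hmul, map_mul]
    rfl
  · rw [← comp_assoc, coactP_comp_lactL hyd hcoL.1 hmul, comp_assoc, coactP_comp_ractL hmul]

end
end
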